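/- arXiv:math/0508035 — 2 statements merged into one kernel-verified Lean document; each statement's English description precedes it below -/
import Mathlib

section
/- In Tsirelson's space T, for n odd let x_n = e_{n³} + (1/4) e_{n³+1}, and let y_m = (1/2) ∑_{i=1}^4 e_{m+i}. Then lim_{n odd, n→∞} lim_{m→∞} ∥x_n + y_m∥ = 13/8. -/
/-- Restriction `E x` of a finitely supported sequence `x` to a set `E ⊆ ℕ`. -/
noncomputable def tRes (E : Finset ℕ) (x : ℕ →₀ ℝ) : ℕ →₀ ℝ := x.filter (· ∈ E)

/-- An admissible family for the Tsirelson norm: `n ≤ E_1 < ... < E_n`. -/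
def tAdm (n : ℕ) (E : Fin n → Finset ℕ) : Prop :=
  (∀ i : Fin n, ∀ a ∈ E i, n ≤ a) ∧
  (∀ i j : Fin n, i < j → ∀ a ∈ E i, ∀ b ∈ E j, a < b)

/-- `N` satisfies the implicit equation of the Tsirelson norm:
`‖x‖ = max(‖x‖_∞, sup_{n ≥ 2, n ≤ E_1 < ... < E_n} (1/2) ∑ ‖E_i x‖)`. -/
def tEq (N : (ℕ →₀ ℝ) → ℝ) : Prop :=
  ∀ x : ℕ →₀ ℝ, N x = max (⨆ i : ℕ, |x i|)
    (sSup {s : ℝ | ∃ n : ℕ, 2 ≤ n ∧ ∃ E : Fin n → Finset ℕ, tAdm n E ∧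
      s = (1 / 2) * ∑ i, N (tRes (E i) x)})

/-- `‖x‖_k = sup (1/2) ∑_{i=1}^k ‖E_i x‖` over `k ≤ E_1 < ... < E_k`. -/
noncomputable def tNormk (N : (ℕ →₀ ℝ) → ℝ) (k : ℕ) (x : ℕ →₀ ℝ) : ℝ :=
  sSup {s : ℝ | ∃ E : Fin k → Finset ℕ, tAdm k E ∧
    s = (1 / 2) * ∑ i, N (tRes (E i) x)}

/-- `z_n = (2/n²) ∑_{i=1}^{n²} e_{n³+i}`. -/
noncomputable def zvec (n : ℕ) : ℕ →₀ ℝ :=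
  ∑ i ∈ Finset.range (n ^ 2), Finsupp.single (n ^ 3 + i + 1) (2 / (n ^ 2 : ℝ))

/-- `x_n = e_{n³} + (1/4) e_{n³+1}` (for `n` odd). -/
noncomputable def xodd (n : ℕ) : ℕ →₀ ℝ :=
  Finsupp.single (n ^ 3) 1 + Finsupp.single (n ^ 3 + 1) (1 / 4)

/-- `y_m = (1/2) ∑_{i=1}^4 e_{m+i}`. -/
noncomputable def yvec (m : ℕ) : ℕ →₀ ℝ :=
  ∑ i ∈ Finset.range 4, Finsupp.single (m + i + 1) (1 / 2 : ℝ)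


/-!
Every admissible family either has one set containing the whole support of `x` or cuts `x` into
pieces of smaller support, so induction on the support gives `‖x‖ ≤ ∑ |x k|`, hence
`‖x‖ ≤ max (‖x‖_∞, (1/2) ∑ |x k|)`; conversely, `n ≥ 2` admissible singletons give
`(1/2) ∑ |x kᵢ| ≤ ‖x‖`. For odd `n ≥ 3` and `m > n³` the six nonzero coordinates of `x_n + y_m`
lie beyond `6 ≤ n³`, so both bounds equal `(1/2)(1 + 1/4 + 2) = 13/8`.
For `n = 1` the inner limit is `1` instead: coordinate `1` lies in no admissible set, families of
three or more sets only see `y_m`, and two sets, each carrying coordinates of size at most `1/2`,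
give at most `max (1/2) (1/4 + (9/4)/4)`.
-/

open Finset Finsupp Function

lemma tRes_apply (E : Finset ℕ) (x : ℕ →₀ ℝ) (k : ℕ) :
    tRes E x k = if k ∈ E then x k else 0 :=
  filter_apply _ _ _

lemma tRes_add (E : Finset ℕ) (x y : ℕ →₀ ℝ) : tRes E (x + y) = tRes E x + tRes E y :=
  filter_add

lemma tRes_zero (E : Finset ℕ) : tRes E 0 = 0 :=
  filter_zero _

lemma tRes_single_add_of_notMem {E : Finset ℕ} {k : ℕ} (hk : k ∉ E) (a : ℝ) (x : ℕ →₀ ℝ) :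
    tRes E (single k a + x) = tRes E x := by
  rw [tRes_add, tRes, filter_single_of_neg _ hk, zero_add]

lemma tRes_singleton (k : ℕ) (x : ℕ →₀ ℝ) : tRes {k} x = single k (x k) := by
  ext j
  rw [tRes_apply, single_apply]
  by_cases h : k = j <;> simp [h, eq_comm]

lemma tRes_eq_self_of_support_subset {E : Finset ℕ} {x : ℕ →₀ ℝ} (h : x.support ⊆ E) :
    tRes E x = x :=
  (filter_eq_self_iff _ _).2 fun _ hk => h (mem_support_iff.2 hk)

lemma tRes_eq_zero_of_disjoint {E : Finset ℕ} {x : ℕ →₀ ℝ} (h : Disjoint x.support E) :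
    tRes E x = 0 :=
  (filter_eq_zero_iff _ _).2 fun _ hk => notMem_support_iff.1 (h.notMem_of_mem_right_finset hk)

lemma support_tRes (E : Finset ℕ) (x : ℕ →₀ ℝ) : (tRes E x).support = x.support ∩ E := by
  rw [tRes, support_filter, filter_mem_eq_inter]

noncomputable def l1 (x : ℕ →₀ ℝ) : ℝ := x.sum fun _ a => |a|

lemma l1_eq_sum_of_support_subset {x : ℕ →₀ ℝ} {s : Finset ℕ} (h : x.support ⊆ s) :
    l1 x = ∑ k ∈ s, |x k| :=
  sum_of_support_subset x h _ fun _ _ => abs_zero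

lemma l1_nonneg (x : ℕ →₀ ℝ) : 0 ≤ l1 x :=
  Finset.sum_nonneg fun _ _ => abs_nonneg _

lemma l1_zero : l1 0 = 0 := sum_zero_index

lemma l1_single (k : ℕ) (a : ℝ) : l1 (single k a) = |a| :=
  sum_single_index abs_zero

lemma l1_add_le (x y : ℕ →₀ ℝ) : l1 (x + y) ≤ l1 x + l1 y := by
  classical
  rw [l1_eq_sum_of_support_subset support_add,
    l1_eq_sum_of_support_subset (subset_union_left (s₂ := y.support)),
    l1_eq_sum_of_support_subset (subset_union_right (s₁ := x.support)), ← sum_add_distrib]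
  exact sum_le_sum fun k _ => abs_add_le _ _

lemma l1_sum_le {ι : Type*} (s : Finset ι) (f : ι → ℕ →₀ ℝ) :
    l1 (∑ i ∈ s, f i) ≤ ∑ i ∈ s, l1 (f i) :=
  Finset.le_sum_of_subadditive l1 l1_zero.le l1_add_le s f

lemma abs_apply_le_l1 (x : ℕ →₀ ℝ) (k : ℕ) : |x k| ≤ l1 x := by
  by_cases hk : k ∈ x.support
  · exact single_le_sum (f := fun k => |x k|) (fun _ _ => abs_nonneg _) hk
  · rw [notMem_support_iff.1 hk, abs_zero]
    exact l1_nonneg x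

lemma sum_l1_tRes_le {n : ℕ} {E : Fin n → Finset ℕ}
    (hE : Pairwise (Disjoint on E)) (x : ℕ →₀ ℝ) :
    ∑ i, l1 (tRes (E i) x) ≤ l1 x := by
  classical
  have hdisj : ((univ : Finset (Fin n)) : Set (Fin n)).PairwiseDisjoint
      fun i => x.support ∩ E i :=
    fun i _ j _ hij => disjoint_of_subset_left inter_subset_right
      (disjoint_of_subset_right inter_subset_right (hE hij))
  calc ∑ i, l1 (tRes (E i) x) = ∑ i, ∑ k ∈ x.support ∩ E i, |x k| := by
        refine sum_congr rfl fun i _ => ?_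
        rw [l1_eq_sum_of_support_subset (support_tRes (E i) x).le]
        refine sum_congr rfl fun k hk => ?_
        rw [tRes_apply, if_pos (mem_inter.1 hk).2]
    _ = ∑ k ∈ univ.biUnion fun i => x.support ∩ E i, |x k| := (sum_biUnion hdisj).symm
    _ ≤ l1 x := by
        rw [l1_eq_sum_of_support_subset (subset_refl _)]
        exact sum_le_sum_of_subset_of_nonneg (biUnion_subset.2 fun _ _ => inter_subset_left)
          fun _ _ _ => abs_nonneg _

lemma tAdm.pairwiseDisjoint {n : ℕ} {E : Fin n → Finset ℕ} (hE : tAdm n E) :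
    Pairwise (Disjoint on E) := by
  intro i j hij
  refine Finset.disjoint_left.2 fun k hki hkj => ?_
  rcases lt_or_gt_of_ne hij with h | h
  · exact lt_irrefl k (hE.2 i j h k hki k hkj)
  · exact lt_irrefl k (hE.2 j i h k hkj k hki)

lemma tAdm_singleton {n : ℕ} {k : Fin n → ℕ} (hk : StrictMono k) (hn : ∀ i, n ≤ k i) :
    tAdm n fun i => {k i} := by
  refine ⟨fun i a ha => ?_, fun i j hij a ha b hb => ?_⟩
  · rw [Finset.mem_singleton.1 ha]; exact hn i
  · rw [Finset.mem_singleton.1 ha, Finset.mem_singleton.1 hb]; exact hk hij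

lemma tAdm_empty (n : ℕ) : tAdm n fun _ => ∅ :=
  ⟨fun _ _ h => absurd h (Finset.notMem_empty _), fun _ _ _ _ h => absurd h (Finset.notMem_empty _)⟩

section Tsirelson

variable {N : (ℕ →₀ ℝ) → ℝ}

lemma N_zero (hN : tEq N) : N 0 = 0 := by
  have h0 := hN 0
  simp only [Finsupp.coe_zero, Pi.zero_apply, abs_zero, ciSup_const, tRes_zero] at h0
  set S := {s : ℝ | ∃ n : ℕ, 2 ≤ n ∧ ∃ E : Fin n → Finset ℕ, tAdm n E ∧
    s = 1 / 2 * ∑ _ : Fin n, N 0}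
  by_cases hS : BddAbove S
  · -- three empty sets are admissible, so `3/2 ‖0‖ ≤ ‖0‖`
    have h3 : 3 / 2 * N 0 ≤ N 0 := by
      refine (le_csSup hS ⟨3, by norm_num, fun _ => ∅, tAdm_empty 3, ?_⟩).trans (h0 ▸ le_max_right _ _)
      simp only [sum_const, card_univ, Fintype.card_fin]
      ring
    have : 0 ≤ N 0 := h0 ▸ le_max_left _ _
    linarith
  · rw [h0, Real.sSup_of_not_bddAbove hS, max_self]

lemma bddAbove_range_abs (x : ℕ →₀ ℝ) : BddAbove (Set.range fun k => |x k|) :=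
  ⟨l1 x, Set.forall_mem_range.2 (abs_apply_le_l1 x)⟩

lemma abs_apply_le_N (hN : tEq N) (x : ℕ →₀ ℝ) (k : ℕ) : |x k| ≤ N x :=
  (le_ciSup (bddAbove_range_abs x) k).trans (hN x ▸ le_max_left _ _)

lemma N_le_l1 (hN : tEq N) (x : ℕ →₀ ℝ) : N x ≤ l1 x := by
  induction hx : x.support.card using Nat.strong_induction_on generalizing x with
  | _ K ih =>
  by_cases hx0 : x = 0
  · rw [hx0, N_zero hN, l1_zero]
  have hsum : ∀ n (E : Fin n → Finset ℕ), tAdm n E →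
      1 / 2 * ∑ i, N (tRes (E i) x) ≤ max (l1 x / 2) (N x / 2) := by
    intro n E hE
    by_cases hfull : ∃ i, x.support ⊆ E i
    · obtain ⟨i₀, hi₀⟩ := hfull
      have hrest : ∀ j ≠ i₀, tRes (E j) x = 0 := fun j hj =>
        tRes_eq_zero_of_disjoint (disjoint_of_subset_left hi₀ (hE.pairwiseDisjoint hj.symm))
      rw [Finset.sum_eq_single i₀ (fun j _ hj => by rw [hrest j hj, N_zero hN]) (by simp),
        tRes_eq_self_of_support_subset hi₀]
      exact le_max_of_le_right (by linarith)
    · push Not at hfull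
      have hpiece : ∀ i, N (tRes (E i) x) ≤ l1 (tRes (E i) x) := fun i => by
        refine ih _ ?_ _ rfl
        rw [← hx, support_tRes]
        exact card_lt_card (ssubset_of_subset_of_ne inter_subset_left
          fun h => hfull i (h ▸ inter_subset_right))
      have := (sum_le_sum fun i _ => hpiece i).trans (sum_l1_tRes_le hE.pairwiseDisjoint x)
      exact le_max_of_le_left (by linarith)
  have hle : N x ≤ max (l1 x) (N x / 2) := by
    refine (hN x).trans_le <| max_le ((ciSup_le (abs_apply_le_l1 x)).trans (le_max_left _ _))
      (Real.sSup_le ?_ (le_max_of_le_left (l1_nonneg x)))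
    rintro s ⟨n, -, E, hE, rfl⟩
    exact (hsum n E hE).trans (max_le_max (by linarith [l1_nonneg x]) le_rfl)
  rcases le_max_iff.1 hle with h | h
  · exact h
  · linarith [l1_nonneg x]

lemma half_sum_le_half_l1 (hN : tEq N) {n : ℕ} {E : Fin n → Finset ℕ}
    (hE : Pairwise (Disjoint on E)) (x : ℕ →₀ ℝ) :
    1 / 2 * ∑ i, N (tRes (E i) x) ≤ l1 x / 2 := by
  have := (sum_le_sum fun i _ => N_le_l1 hN (tRes (E i) x)).trans (sum_l1_tRes_le hE x)
  linarith

lemma half_sum_le_N (hN : tEq N) {n : ℕ} (hn : 2 ≤ n) {E : Fin n → Finset ℕ} (hE : tAdm n E)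
    (x : ℕ →₀ ℝ) : 1 / 2 * ∑ i, N (tRes (E i) x) ≤ N x := by
  have hbdd : BddAbove {s : ℝ | ∃ n : ℕ, 2 ≤ n ∧ ∃ E : Fin n → Finset ℕ, tAdm n E ∧
      s = 1 / 2 * ∑ i, N (tRes (E i) x)} := by
    refine ⟨l1 x / 2, ?_⟩
    rintro s ⟨n, -, E, hE, rfl⟩
    exact half_sum_le_half_l1 hN hE.pairwiseDisjoint x
  exact (le_csSup hbdd ⟨n, hn, E, hE, rfl⟩).trans (hN x ▸ le_max_right _ _)

lemma N_le_of_forall (hN : tEq N) {x : ℕ →₀ ℝ} {B : ℝ} (hB : 0 ≤ B) (habs : ∀ k, |x k| ≤ B)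
    (hsum : ∀ n, 2 ≤ n → ∀ E : Fin n → Finset ℕ, tAdm n E → 1 / 2 * ∑ i, N (tRes (E i) x) ≤ B) :
    N x ≤ B := by
  rw [hN x]
  refine max_le (ciSup_le habs) (Real.sSup_le ?_ hB)
  rintro s ⟨n, hn, E, hE, rfl⟩
  exact hsum n hn E hE

lemma N_le_max_half_l1 (hN : tEq N) {x : ℕ →₀ ℝ} {c : ℝ} (hc : 0 ≤ c) (habs : ∀ k, |x k| ≤ c) :
    N x ≤ max c (l1 x / 2) :=
  N_le_of_forall hN (le_max_of_le_left hc) (fun k => le_max_of_le_left (habs k))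
    fun _ _ _ hE => le_max_of_le_right (half_sum_le_half_l1 hN hE.pairwiseDisjoint x)

lemma N_single (hN : tEq N) (k : ℕ) (a : ℝ) : N (single k a) = |a| :=
  le_antisymm ((N_le_l1 hN _).trans (l1_single k a).le)
    (by simpa using abs_apply_le_N hN (single k a) k)

lemma half_sum_abs_le_N (hN : tEq N) {n : ℕ} (hn : 2 ≤ n) {k : Fin n → ℕ} (hk : StrictMono k)
    (hkn : ∀ i, n ≤ k i) (x : ℕ →₀ ℝ) : 1 / 2 * ∑ i, |x (k i)| ≤ N x := by
  simpa only [tRes_singleton, N_single hN] using half_sum_le_N hN hn (tAdm_singleton hk hkn) x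

lemma half_sum_two_le (hN : tEq N) {E : Fin 2 → Finset ℕ} (hE : Disjoint (E 0) (E 1))
    {x : ℕ →₀ ℝ} {c : ℝ} (hc : 0 ≤ c) (habs : ∀ k, |x k| ≤ c) :
    1 / 2 * ∑ i, N (tRes (E i) x) ≤ max c (c / 2 + l1 x / 4) := by
  have hpiece : ∀ i, N (tRes (E i) x) ≤ max c (l1 (tRes (E i) x) / 2) := fun i =>
    N_le_max_half_l1 hN hc fun k => by
      rw [tRes_apply]; split_ifs
      exacts [habs k, abs_zero.trans_le hc]
  have hl1 : l1 (tRes (E 0) x) + l1 (tRes (E 1) x) ≤ l1 x := by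
    have hpair : Pairwise (Disjoint on E) := by
      intro i j hij
      fin_cases i <;> fin_cases j
      exacts [absurd rfl hij, hE, hE.symm, absurd rfl hij]
    simpa only [Fin.sum_univ_two] using sum_l1_tRes_le hpair x
  have h0 := hpiece 0
  have h1 := hpiece 1
  rw [Fin.sum_univ_two]
  have := l1_nonneg (tRes (E 0) x)
  have := l1_nonneg (tRes (E 1) x)
  rcases max_choice c (l1 (tRes (E 0) x) / 2) with h | h <;> rw [h] at h0 <;>
    rcases max_choice c (l1 (tRes (E 1) x) / 2) with h | h <;> rw [h] at h1
  · exact le_max_of_le_left (by linarith)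
  all_goals exact le_max_of_le_right (by linarith)

end Tsirelson

lemma yvec_apply (m k : ℕ) : yvec m k = if m < k ∧ k ≤ m + 4 then 1 / 2 else 0 := by
  simp only [yvec, sum_range_succ, range_zero, sum_empty, zero_add, Finsupp.coe_add, Pi.add_apply,
    single_apply]
  split_ifs <;> first | omega | norm_num

lemma xodd_add_yvec_apply {n m : ℕ} (hm : n ^ 3 + 1 ≤ m) (k : ℕ) :
    (xodd n + yvec m) k = if k = n ^ 3 then 1 else if k = n ^ 3 + 1 then 1 / 4 else
      if m < k ∧ k ≤ m + 4 then 1 / 2 else 0 := by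
  rw [Finsupp.add_apply, yvec_apply, xodd, Finsupp.add_apply, single_apply, single_apply]
  split_ifs <;> first | omega | norm_num

lemma abs_xodd_add_yvec_apply_le {n m : ℕ} (hm : n ^ 3 + 1 ≤ m) (k : ℕ) :
    |(xodd n + yvec m) k| ≤ 1 := by
  rw [xodd_add_yvec_apply hm]
  split_ifs <;> norm_num

lemma xodd_add_yvec_apply_cube {n m : ℕ} (hm : n ^ 3 + 1 ≤ m) : (xodd n + yvec m) (n ^ 3) = 1 := by
  rw [xodd_add_yvec_apply hm, if_pos rfl]

lemma xodd_add_yvec_apply_cube_add_one {n m : ℕ} (hm : n ^ 3 + 1 ≤ m) :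
    (xodd n + yvec m) (n ^ 3 + 1) = 1 / 4 := by
  rw [xodd_add_yvec_apply hm, if_neg (by omega), if_pos rfl]

lemma xodd_add_yvec_apply_of_lt {n m : ℕ} (hm : n ^ 3 + 1 ≤ m) {k : ℕ} (hk : m < k)
    (hk' : k ≤ m + 4) : (xodd n + yvec m) k = 1 / 2 := by
  rw [xodd_add_yvec_apply hm, if_neg (by omega), if_neg (by omega), if_pos ⟨hk, hk'⟩]

lemma l1_yvec_le (m : ℕ) : l1 (yvec m) ≤ 2 :=
  (l1_sum_le _ _).trans (by norm_num [l1_single])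

lemma l1_xodd_add_yvec_le (n m : ℕ) : l1 (xodd n + yvec m) ≤ 13 / 4 := by
  have := l1_add_le (single (n ^ 3) (1 : ℝ)) (single (n ^ 3 + 1) (1 / 4))
  have := l1_add_le (xodd n) (yvec m)
  have := l1_yvec_le m
  simp only [l1_single] at *
  norm_num [xodd] at *
  linarith

lemma N_xodd_add_yvec {N : (ℕ →₀ ℝ) → ℝ} (hN : tEq N) {n m : ℕ} (hn : 2 ≤ n)
    (hm : n ^ 3 + 1 ≤ m) : N (xodd n + yvec m) = 13 / 8 := by
  have hn3 : 8 ≤ n ^ 3 := by simpa using Nat.pow_le_pow_left hn 3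
  refine le_antisymm ?_ ?_
  · refine (N_le_max_half_l1 hN zero_le_one (abs_xodd_add_yvec_apply_le hm)).trans ?_
    exact max_le (by norm_num) (by linarith [l1_xodd_add_yvec_le n m])
  · have h := half_sum_abs_le_N hN (n := 6) (k := ![n ^ 3, n ^ 3 + 1, m + 1, m + 2, m + 3, m + 4])
      (by norm_num) (Fin.strictMono_iff_lt_succ.2 fun i => by fin_cases i <;> simp; omega)
      (fun i => by fin_cases i <;> simp <;> omega) (xodd n + yvec m)
    simp (disch := omega) only [Fin.sum_univ_six, Matrix.cons_val, xodd_add_yvec_apply_cube hm,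
      xodd_add_yvec_apply_cube_add_one hm, xodd_add_yvec_apply_of_lt hm] at h
    norm_num at h
    linarith

lemma N_xodd_one_add_yvec {N : (ℕ →₀ ℝ) → ℝ} (hN : tEq N) {m : ℕ} (hm : 3 ≤ m) :
    N (xodd 1 + yvec m) = 1 := by
  have hm' : 1 ^ 3 + 1 ≤ m := by omega
  set v : ℕ →₀ ℝ := single 2 (1 / 4) + yvec m with hv
  have hx : xodd 1 + yvec m = single 1 1 + v := by
    rw [xodd, hv, add_assoc]; norm_num
  refine le_antisymm (N_le_of_forall hN zero_le_one (abs_xodd_add_yvec_apply_le hm') ?_) ?_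
  · intro n hn E hE
    have hres : ∀ i, tRes (E i) (xodd 1 + yvec m) = tRes (E i) v := fun i => by
      rw [hx, tRes_single_add_of_notMem fun h => by have := hE.1 i 1 h; omega]
    simp only [hres]
    rcases hn.eq_or_lt with rfl | hn
    · have habs : ∀ k, |v k| ≤ 1 / 2 := fun k => by
        rw [hv, Finsupp.add_apply, single_apply, yvec_apply]
        split_ifs <;> first | omega | norm_num
      have hl1 : l1 v ≤ 9 / 4 := by
        have := l1_add_le (single 2 (1 / 4 : ℝ)) (yvec m)
        rw [l1_single, ← hv] at this
        norm_num at this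
        linarith [l1_yvec_le m]
      refine (half_sum_two_le hN (hE.pairwiseDisjoint (by decide)) (by norm_num) habs).trans ?_
      exact max_le (by norm_num) (by linarith)
    · have hres' : ∀ i, tRes (E i) v = tRes (E i) (yvec m) :=
        fun i => tRes_single_add_of_notMem (fun h => by have := hE.1 i 2 h; omega) _ _
      simp only [hres']
      exact (half_sum_le_half_l1 hN hE.pairwiseDisjoint _).trans (by linarith [l1_yvec_le m])
  · have h := half_sum_abs_le_N hN (n := 4) (k := ![m + 1, m + 2, m + 3, m + 4]) (by norm_num)
      (Fin.strictMono_iff_lt_succ.2 fun i => by fin_cases i <;> simp)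
      (fun i => by fin_cases i <;> simp <;> omega) (xodd 1 + yvec m)
    simp (disch := omega) only [Fin.sum_univ_four, Matrix.cons_val,
      xodd_add_yvec_apply_of_lt hm'] at h
    norm_num at h
    exact h

/-- in Tsirelson's space `T`,
`lim_{n odd, n→∞} lim_{m→∞} ‖x_n + y_m‖ = 13/8`. -/
theorem stmt12 (N : (ℕ →₀ ℝ) → ℝ) (hN : tEq N) :
    ∃ L : ℕ → ℝ,
      (∀ n : ℕ, Odd n →
        Filter.Tendsto (fun m => N (xodd n + yvec m)) Filter.atTop (nhds (L n))) ∧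
      Filter.Tendsto (fun j => L (2 * j + 1)) Filter.atTop (nhds (13 / 8)) := by
  refine ⟨fun n => if n = 1 then 1 else 13 / 8, fun n hn => ?_, ?_⟩
  · obtain ⟨k, rfl⟩ := hn
    refine tendsto_const_nhds.congr' ?_
    filter_upwards [Filter.eventually_ge_atTop ((2 * k + 1) ^ 3 + 3)] with m hm
    rcases k.eq_zero_or_pos with rfl | hk
    · exact (N_xodd_one_add_yvec hN (by omega)).symm
    · rw [if_neg (by omega)]
      exact (N_xodd_add_yvec hN (by omega) (by omega)).symm
  · refine tendsto_const_nhds.congr' ?_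
    filter_upwards [Filter.eventually_ge_atTop 1] with j hj
    rw [if_neg (by omega)]
end

section
/- Let 1 ≤ p < ∞ and suppose (y_{i,j}) for 1 ≤ i ≤ m, 1 ≤ j ≤ n_i + 1 are vectors with δ ≤ ∥y_{i,j}∥ ≤ δ + δ' for j ≤ n_i and ∥y_{i,n_i+1}∥ < δ, where a_i y_i = ∑_{j=1}^{n_i+1} y_{i,j} with ∥y_i∥ = 1. If for every collection of N (= ∑ n_i) successive normalized blocks one has the two-sided estimate ∥∑ z_j∥ ∼_K (number of terms)^{1/p}·(common norm) (valid for N < N'), then |a_i| > (δ/(2K)) n_i^{1/p} and |a_i| < 2δK n_i^{1/p} whenever |a_i| ≥ ε, under the parameter constraints ε < 1/(8m(2K)^{2p}), δ = ε/(4Km), N' > 2m(2K/δ)^p, δ' < δ/(2KN'). -/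
/-!
Fix `i` and write `A = |a_i| = ‖∑_j y_{i,j}‖`. Rescaling each of the first `n = n_i` blocks to
norm exactly `δ` moves their sum by at most `n δ'`, so the block estimate gives
`δ n^{1/p} / K - n δ' ≤ ‖∑_{j ≤ n} y_{i,j}‖ ≤ δ K n^{1/p} + n δ'`, while the small last block
changes the norm by less than `δ`. The block estimate only applies when `n < N'`; if `n ≥ N'`, the
first `N' - 1` blocks form a coordinate projection of `a_i y_i`, hence have norm at most `A ≤ 1`,
yet by the choice of `N'` their norm is at least about `δ (N' - 1)^{1/p} / K ≥ 2`.
Finally `A ≥ ε ≥ 4 K δ` absorbs the errors `δ` and `n δ' < δ / (2K)`.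
-/

/-- A finite family of finitely supported vectors is successive if their
supports are strictly increasing. -/
def Successive {t : ℕ} (z : Fin t → (ℕ →₀ ℝ)) : Prop :=
  ∀ j j' : Fin t, j < j' → ∀ s ∈ (z j).support, ∀ u ∈ (z j').support, s < u

open Finset

def HasBlockLpEstimate (q : (ℕ →₀ ℝ) → ℝ) (p K : ℝ) (N' : ℕ) : Prop :=
  ∀ t : ℕ, (t : ℝ) < N' → ∀ z : Fin t → (ℕ →₀ ℝ), Successive z → (∀ j, q (z j) = 1) →
    (t : ℝ) ^ (1 / p) / K ≤ q (∑ j, z j) ∧ q (∑ j, z j) ≤ K * (t : ℝ) ^ (1 / p)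

namespace Successive

variable {t : ℕ} {z : Fin t → (ℕ →₀ ℝ)}

lemma comp_strictMono (hz : Successive z) {s : ℕ} {f : Fin s → Fin t} (hf : StrictMono f) :
    Successive (z ∘ f) :=
  fun _ _ h => hz _ _ (hf h)

lemma smul (hz : Successive z) (r : Fin t → ℝ) : Successive (fun j => r j • z j) :=
  fun j j' h _ hs _ hu => hz j j' h _ (Finsupp.support_smul hs) _ (Finsupp.support_smul hu)

lemma exists_separating (hz : Successive z) (T : ℕ) :
    ∃ k, (∀ j : Fin t, (j : ℕ) < T → ∀ s ∈ (z j).support, s < k) ∧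
      (∀ j : Fin t, T ≤ (j : ℕ) → ∀ u ∈ (z j).support, k ≤ u) := by
  classical
  -- `k` exceeds every coordinate used by the first `T` blocks
  refine ⟨(univ.filter fun j : Fin t => (j : ℕ) < T).sup fun j => (z j).support.sup (· + 1),
    fun j hj s hs => ?_, fun j hj u hu => ?_⟩
  · exact Nat.lt_of_succ_le <| (le_sup (f := (· + 1)) hs).trans
      (le_sup (f := fun j => (z j).support.sup (· + 1)) (mem_filter.2 ⟨mem_univ j, hj⟩))
  · exact Finset.sup_le fun j' hj' => Finset.sup_le fun s hs =>
      hz j' j (Fin.lt_def.2 ((mem_filter.1 hj').2.trans_le hj)) s hs u hu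

lemma exists_filter_lt_sum_eq (hz : Successive z) {T : ℕ} (hT : T ≤ t) :
    ∃ k, (∑ j, z j).filter (· < k) = ∑ j : Fin T, z (Fin.castLE hT j) := by
  obtain ⟨k, hbelow, habove⟩ := hz.exists_separating T
  refine ⟨k, ?_⟩
  rw [Finsupp.filter_sum]
  refine (Fintype.sum_of_injective (Fin.castLE hT) (Fin.castLE_injective hT) _ _ ?_ ?_).symm
  · intro j hj
    have hTj : T ≤ (j : ℕ) := by
      by_contra! h
      exact hj ⟨⟨j, h⟩, rfl⟩
    rw [Finsupp.filter_eq_zero_iff]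
    intro u hu
    by_contra h
    exact (habove j hTj u (Finsupp.mem_support_iff.2 h)).not_gt hu
  · intro j
    rw [eq_comm, Finsupp.filter_eq_self_iff]
    exact fun s hs => hbelow _ j.isLt s (Finsupp.mem_support_iff.2 hs)

lemma map_sum_castLE_le (hz : Successive z) {q : (ℕ →₀ ℝ) → ℝ}
    (hq : ∀ u k, q (u.filter (· < k)) ≤ q u) {T : ℕ} (hT : T ≤ t) :
    q (∑ j : Fin T, z (Fin.castLE hT j)) ≤ q (∑ j, z j) := by
  obtain ⟨k, hk⟩ := hz.exists_filter_lt_sum_eq hT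
  exact hk ▸ hq _ k

end Successive

section Seminorm

variable {E : Type*} [AddCommGroup E] [Module ℝ E] (q : Seminorm ℝ E)

lemma Seminorm.map_inv_smul_self {x : E} (hx : q x ≠ 0) : q ((q x)⁻¹ • x) = 1 := by
  rw [map_smul_eq_mul, Real.norm_eq_abs, abs_inv, abs_of_nonneg (apply_nonneg q x),
    inv_mul_cancel₀ hx]

lemma Seminorm.abs_map_sum_sub_le_of_mem_Icc {T : ℕ} (c : Fin T → E) {δ δ' : ℝ} (hδ : 0 < δ)
    (hc : ∀ j, q (c j) ∈ Set.Icc δ (δ + δ')) :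
    |q (∑ j, c j) - δ * q (∑ j, (q (c j))⁻¹ • c j)| ≤ T * δ' := by
  have hne : ∀ j, q (c j) ≠ 0 := fun j => (hδ.trans_le (hc j).1).ne'
  have hsplit : ∑ j, c j - δ • ∑ j, (q (c j))⁻¹ • c j =
      ∑ j, (q (c j) - δ) • (q (c j))⁻¹ • c j := by
    rw [smul_sum, ← sum_sub_distrib]
    refine sum_congr rfl fun j _ => ?_
    rw [sub_smul, smul_inv_smul₀ (hne j)]
  calc |q (∑ j, c j) - δ * q (∑ j, (q (c j))⁻¹ • c j)|
      = |q (∑ j, c j) - q (δ • ∑ j, (q (c j))⁻¹ • c j)| := by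
        rw [map_smul_eq_mul, Real.norm_of_nonneg hδ.le]
    _ ≤ q (∑ j, c j - δ • ∑ j, (q (c j))⁻¹ • c j) := abs_sub_map_le_sub q _ _
    _ ≤ ∑ j, q ((q (c j) - δ) • (q (c j))⁻¹ • c j) :=
        hsplit ▸ le_sum_of_subadditive q (map_zero q).le (map_add_le_add q) _ _
    _ ≤ ∑ _j : Fin T, δ' := sum_le_sum fun j _ => by
        rw [map_smul_eq_mul, q.map_inv_smul_self (hne j), mul_one, Real.norm_of_nonneg]
        all_goals linarith [(hc j).1, (hc j).2]
    _ = T * δ' := by simp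

end Seminorm

lemma nat_mul_lt_of_lt_div {T N : ℕ} {x r : ℝ} (hTN : T ≤ N) (hr : 0 < r) (hx : x < r / N) :
    T * x < r := by
  rcases le_or_gt x 0 with hx0 | hx0
  · exact (mul_nonpos_of_nonneg_of_nonpos T.cast_nonneg hx0).trans_lt hr
  have hN : (0 : ℝ) < N := by
    rcases Nat.eq_zero_or_pos N with h | h
    · simp only [h, CharP.cast_eq_zero, div_zero] at hx
      linarith
    · exact_mod_cast h
  calc (T : ℝ) * x ≤ N * x := by gcongr
    _ < r := (lt_div_iff₀' hN).1 hx

namespace HasBlockLpEstimate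

variable {q : Seminorm ℝ (ℕ →₀ ℝ)} {p K δ δ' : ℝ} {N' : ℕ}

lemma bounds_of_mem_Icc (hq : HasBlockLpEstimate q p K N') (hδ : 0 < δ)
    {T : ℕ} (hT : (T : ℝ) < N') {c : Fin T → ℕ →₀ ℝ} (hc : Successive c)
    (hcδ : ∀ j, q (c j) ∈ Set.Icc δ (δ + δ')) :
    δ * T ^ (1 / p) / K - T * δ' ≤ q (∑ j, c j) ∧
      q (∑ j, c j) ≤ δ * K * T ^ (1 / p) + T * δ' := by
  obtain ⟨hlo, hhi⟩ := hq T hT _ (hc.smul _)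
    fun j => q.map_inv_smul_self (hδ.trans_le (hcδ j).1).ne'
  have herr := abs_le.1 (q.abs_map_sum_sub_le_of_mem_Icc c hδ hcδ)
  have hlo' := mul_le_mul_of_nonneg_left hlo hδ.le
  have hhi' := mul_le_mul_of_nonneg_left hhi hδ.le
  rw [mul_div_assoc, mul_assoc]
  constructor <;> linarith

lemma length_lt_of_mem_Icc (hq : HasBlockLpEstimate q p K N')
    (hmono : ∀ u k, q (u.filter (· < k)) ≤ q u) (hp : 0 < p) (hK : 0 < K) (hδ : 0 < δ)
    (hδK : δ < 2 * K)
    (hN' : (2 * K / δ) ^ p + 1 ≤ N') (hδ' : δ' < δ / (2 * K * N'))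
    {n : ℕ} {c : Fin n → ℕ →₀ ℝ} (hc : Successive c)
    (hcδ : ∀ j, q (c j) ∈ Set.Icc δ (δ + δ')) (hsum : q (∑ j, c j) ≤ 1) :
    n < N' := by
  by_contra! hn
  have hN'1 : 1 ≤ N' := by
    have := Real.rpow_nonneg (by positivity : 0 ≤ 2 * K / δ) p
    exact_mod_cast (by linarith : (1 : ℝ) ≤ N')
  have hT : ((N' - 1 : ℕ) : ℝ) = N' - 1 := by push_cast [hN'1]; ring
  obtain ⟨hlo, -⟩ := hq.bounds_of_mem_Icc hδ (by rw [hT]; linarith)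
    (hc.comp_strictMono (Fin.strictMono_castLE (N'.sub_le 1 |>.trans hn))) fun j => hcδ _
  have hpre := hc.map_sum_castLE_le hmono (N'.sub_le 1 |>.trans hn)
  have hroot : 2 * K / δ ≤ ((N' - 1 : ℕ) : ℝ) ^ (1 / p) := by
    rw [one_div, Real.le_rpow_inv_iff_of_pos (by positivity) (Nat.cast_nonneg _) hp, hT]
    linarith
  have hbig : 2 * K ≤ δ * ((N' - 1 : ℕ) : ℝ) ^ (1 / p) := by
    calc 2 * K = δ * (2 * K / δ) := by field_simp
      _ ≤ _ := by gcongr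
  have hsmall : ((N' - 1 : ℕ) : ℝ) * δ' < δ / (2 * K) :=
    nat_mul_lt_of_lt_div (N'.sub_le 1) (by positivity) (by rwa [div_div])
  have hδK' : δ / (2 * K) < 1 := (div_lt_one (by positivity)).2 hδK
  have h2 : 2 ≤ δ * ((N' - 1 : ℕ) : ℝ) ^ (1 / p) / K := by rw [le_div_iff₀ hK]; linarith
  simp only [Function.comp_apply] at hlo
  linarith

lemma rpow_bounds_of_decomposition (hq : HasBlockLpEstimate q p K N')
    (hmono : ∀ u k, q (u.filter (· < k)) ≤ q u) (hp : 0 < p) (hK : 2 < K) (hδ : 0 < δ)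
    (hN' : (2 * K / δ) ^ p + 1 ≤ N') (hδ' : δ' < δ / (2 * K * N'))
    {n : ℕ} {z : Fin (n + 1) → ℕ →₀ ℝ} (hz : Successive z)
    (hzδ : ∀ j : Fin (n + 1), (j : ℕ) < n → q (z j) ∈ Set.Icc δ (δ + δ'))
    (hlast : q (z (Fin.last n)) < δ) (hsum : 2 * δ ≤ q (∑ j, z j))
    (hsum1 : q (∑ j, z j) ≤ 1) :
    1 ≤ n ∧ δ / (2 * K) * n ^ (1 / p) < q (∑ j, z j) ∧
      q (∑ j, z j) < 2 * δ * K * n ^ (1 / p) := by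
  have hc : Successive fun j : Fin n => z j.castSucc :=
    hz.comp_strictMono Fin.strictMono_castSucc
  have hcδ : ∀ j : Fin n, q (z j.castSucc) ∈ Set.Icc δ (δ + δ') := fun j => hzδ _ j.isLt
  have hpre : q (∑ j : Fin n, z j.castSucc) ≤ q (∑ j, z j) := hz.map_sum_castLE_le hmono n.le_succ
  have hgap : |q (∑ j, z j) - q (∑ j : Fin n, z j.castSucc)| < δ :=
    calc _ ≤ q (∑ j, z j - ∑ j : Fin n, z j.castSucc) := abs_sub_map_le_sub _ _ _
      _ = q (z (Fin.last n)) := by rw [Fin.sum_univ_castSucc, add_sub_cancel_left]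
      _ < δ := hlast
  have hn : n < N' := hq.length_lt_of_mem_Icc hmono hp (by linarith) hδ (by linarith) hN' hδ'
    hc hcδ (hpre.trans hsum1)
  obtain ⟨hlo, hhi⟩ := hq.bounds_of_mem_Icc hδ (by exact_mod_cast hn) hc hcδ
  have hsmall : n * δ' < δ / (2 * K) :=
    nat_mul_lt_of_lt_div hn.le (by positivity) (by rwa [div_div])
  have hδdiv : δ / (2 * K) < δ := div_lt_self hδ (by linarith)
  have hgap' := abs_lt.1 hgap
  have hn1 : 1 ≤ n := by
    rcases Nat.eq_zero_or_pos n with rfl | h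
    · simp only [CharP.cast_eq_zero, Real.zero_rpow (one_div_ne_zero hp.ne')] at hhi
      linarith
    · exact h
  have hX : 1 ≤ (n : ℝ) ^ (1 / p) := Real.one_le_rpow (by exact_mod_cast hn1) (by positivity)
  refine ⟨hn1, ?_, ?_⟩
  · have h2 : δ * n ^ (1 / p) / K < 2 * q (∑ j, z j) := by linarith
    calc δ / (2 * K) * n ^ (1 / p) = δ * n ^ (1 / p) / K / 2 := by field_simp
      _ < q (∑ j, z j) := by linarith
  · have h2 : δ * K * 1 ≤ δ * K * n ^ (1 / p) := by gcongr
    nlinarith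

end HasBlockLpEstimate

theorem stmt17_general (p K ε δ δ' : ℝ) (m N' : ℕ) (Nn : (ℕ →₀ ℝ) → ℝ)
    (hp : 1 ≤ p) (hK : 2 < K)
    (hδ : δ = ε / (4 * K * m))
    (hN' : 2 * m * (2 * K / δ) ^ p < (N' : ℝ))
    (hδ' : δ' < δ / (2 * K * N'))
    (hadd : ∀ u v : ℕ →₀ ℝ, Nn (u + v) ≤ Nn u + Nn v)
    (hhom : ∀ (c : ℝ) (u : ℕ →₀ ℝ), Nn (c • u) = |c| * Nn u)
    (hmono : ∀ (u : ℕ →₀ ℝ) (k : ℕ),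
      Nn (u.filter (fun s => s < k)) ≤ Nn u ∧ Nn (u.filter (fun s => k ≤ s)) ≤ Nn u)
    (hblock : ∀ t : ℕ, (t : ℝ) < N' → ∀ z : Fin t → (ℕ →₀ ℝ), Successive z →
      (∀ j, Nn (z j) = 1) →
      (t : ℝ) ^ (1 / p) / K ≤ Nn (∑ j, z j) ∧ Nn (∑ j, z j) ≤ K * (t : ℝ) ^ (1 / p))
    (a : Fin m → ℝ) (ha : ∑ i, |a i| ^ p = 1)
    (y : Fin m → (ℕ →₀ ℝ)) (hy : ∀ i, Nn (y i) = 1)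
    (n : Fin m → ℕ)
    (yb : ∀ i : Fin m, Fin (n i + 1) → (ℕ →₀ ℝ))
    (hsum : ∀ i, a i • y i = ∑ j, yb i j)
    (hsucc : ∀ i, Successive (yb i))
    (hnb : ∀ (i : Fin m) (j : Fin (n i + 1)), (j : ℕ) < n i →
      δ ≤ Nn (yb i j) ∧ Nn (yb i j) < δ + δ')
    (hlast : ∀ i : Fin m, Nn (yb i (Fin.last (n i))) < δ) :
    ∀ i : Fin m, ε ≤ |a i| →
      1 ≤ n i ∧ (δ / (2 * K)) * (n i : ℝ) ^ (1 / p) < |a i| ∧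
        |a i| < 2 * δ * K * (n i : ℝ) ^ (1 / p) := by
  intro i hi
  let q : Seminorm ℝ (ℕ →₀ ℝ) := Seminorm.of Nn hadd hhom
  have hA : q (∑ j, yb i j) = |a i| := by
    rw [← hsum]
    exact (hhom _ _).trans (by rw [hy, mul_one])
  have hA1 : |a i| ≤ 1 := by
    have : |a i| ^ p ≤ 1 ^ p := by
      rw [Real.one_rpow, ← ha]
      exact single_le_sum (f := fun j => |a j| ^ p) (fun j _ => by positivity) (mem_univ i)
    exact (Real.rpow_le_rpow_iff (abs_nonneg _) zero_le_one (by linarith)).1 this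
  have hδpos : 0 < δ := (apply_nonneg q _).trans_lt (hlast i)
  have hm : (1 : ℝ) ≤ m := by exact_mod_cast i.pos
  have hε : 4 * K * δ ≤ ε := by
    calc 4 * K * δ ≤ 4 * K * δ * m := le_mul_of_one_le_right (by positivity) hm
      _ = ε := by rw [hδ]; field_simp
  have hX : 1 ≤ (2 * K / δ) ^ p :=
    Real.one_le_rpow ((one_le_div hδpos).2 (by nlinarith)) (by linarith)
  have := HasBlockLpEstimate.rpow_bounds_of_decomposition (q := q) hblock
    (fun u k => (hmono u k).1) (by linarith) hK hδpos (by nlinarith) hδ' (hsucc i)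
    (fun j hj => ⟨(hnb i j hj).1, (hnb i j hj).2.le⟩) (hlast i) (by rw [hA]; nlinarith)
    (hA ▸ hA1)
  rwa [hA] at this

/-- estimates (3.16) and (3.17) of the proof of Theorem 3.7.
In a space (here: `c₀₀` with a norm `Nn` that is subadditive, absolutely
homogeneous and bimonotone) in which every family of `t < N'` successive
normalized blocks satisfies `K⁻¹ t^{1/p} ≤ ‖∑ z_j‖ ≤ K t^{1/p}`, if
`a_i y_i = ∑_{j=1}^{n_i+1} y_{i,j}` with `‖y_i‖ = 1`, `δ ≤ ‖y_{i,j}‖ < δ + δ'`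
for `j ≤ n_i` and `‖y_{i,n_i+1}‖ < δ`, and `∑ |a_i|^p = 1`, then under the
parameter constraints `ε < 1/(8m(2K)^{2p})`, `δ = ε/(4Km)`, `N' > 2m(2K/δ)^p`,
`δ' < δ/(2KN')`, one has for each `i` with `|a_i| ≥ ε` that `n_i ≥ 1` and
`(δ/(2K)) n_i^{1/p} < |a_i| < 2δK n_i^{1/p}`. -/
theorem stmt17 (p K ε δ δ' : ℝ) (m N' : ℕ) (Nn : (ℕ →₀ ℝ) → ℝ)
    (hp : 1 ≤ p) (hK : 2 < K) (hm : 1 ≤ m)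
    (hε : 0 < ε) (hεb : ε < 1 / (8 * m * (2 * K) ^ (2 * p)))
    (hδ : δ = ε / (4 * K * m))
    (hN' : 2 * m * (2 * K / δ) ^ p < (N' : ℝ))
    (hδ'0 : 0 < δ') (hδ' : δ' < δ / (2 * K * N'))
    (hadd : ∀ u v : ℕ →₀ ℝ, Nn (u + v) ≤ Nn u + Nn v)
    (hhom : ∀ (c : ℝ) (u : ℕ →₀ ℝ), Nn (c • u) = |c| * Nn u)
    (hmono : ∀ (u : ℕ →₀ ℝ) (k : ℕ),
      Nn (u.filter (fun s => s < k)) ≤ Nn u ∧ Nn (u.filter (fun s => k ≤ s)) ≤ Nn u)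
    (hblock : ∀ t : ℕ, (t : ℝ) < N' → ∀ z : Fin t → (ℕ →₀ ℝ), Successive z →
      (∀ j, Nn (z j) = 1) →
      (t : ℝ) ^ (1 / p) / K ≤ Nn (∑ j, z j) ∧ Nn (∑ j, z j) ≤ K * (t : ℝ) ^ (1 / p))
    (a : Fin m → ℝ) (ha : ∑ i, |a i| ^ p = 1)
    (y : Fin m → (ℕ →₀ ℝ)) (hy : ∀ i, Nn (y i) = 1)
    (n : Fin m → ℕ)
    (yb : ∀ i : Fin m, Fin (n i + 1) → (ℕ →₀ ℝ))
    (hsum : ∀ i, a i • y i = ∑ j, yb i j)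
    (hsucc : ∀ i, Successive (yb i))
    (hnb : ∀ (i : Fin m) (j : Fin (n i + 1)), (j : ℕ) < n i →
      δ ≤ Nn (yb i j) ∧ Nn (yb i j) < δ + δ')
    (hlast : ∀ i : Fin m, Nn (yb i (Fin.last (n i))) < δ) :
    ∀ i : Fin m, ε ≤ |a i| →
      1 ≤ n i ∧ (δ / (2 * K)) * (n i : ℝ) ^ (1 / p) < |a i| ∧
        |a i| < 2 * δ * K * (n i : ℝ) ^ (1 / p) :=
  stmt17_general p K ε δ δ' m N' Nn hp hK hδ hN' hδ' hadd hhom hmono hblock a ha y hy n yb hsum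
    hsucc hnb hlast
end
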